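/- Let f ∈ ℂ[[x,y,z,t]] be such that, with respect to the weights (1,5,3,2) for (x,y,z,t), one has wt f = 6, and such that f is contact equivalent to x³ + y² + z² + t² (i.e. f defines an A₂-singularity). Then the coefficient of the monomial xy in f is non-zero. -/

import Mathlib

/-!
Write `Ψ = Φ⁻¹` and `bᵢ = Ψ(Xᵢ)`. Then `S = Ψ(x³ + y² + z² + t²) = b₀³ + b₁² + b₂² + b₃²` is a
multiple of `f`, so it has weighted order `≥ 6`, and if `f` has no `xy` term then neither has `S`.
Hence the coefficients of `S` at all `x·xₖ` and at `x³` vanish; they are the linear coefficients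
of `∂ₓS` and, up to a factor `6`, the `x`-coefficient of `∂ₓ²S`. With `pᵢ` the `x`-coefficient of
`bᵢ`, the first says that `Ψ(p₁y + p₂z + p₃t)` has no linear part, which forces `p₁ = p₂ = p₃ = 0`
because the linear part of an automorphism is invertible; the second then reads `6p₀³ = 0`. So no
`bᵢ` has a linear `x`-term, again contradicting the invertibility of the linear part of `Ψ`.
-/

noncomputable section

open MvPowerSeries

def ContactEquiv (f g : MvPowerSeries (Fin 4) ℂ) : Prop :=
  ∃ (Φ : MvPowerSeries (Fin 4) ℂ ≃ₐ[ℂ] MvPowerSeries (Fin 4) ℂ)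
    (u : (MvPowerSeries (Fin 4) ℂ)ˣ), g = (u : MvPowerSeries (Fin 4) ℂ) * Φ f

namespace MvPowerSeries

open Finsupp

theorem coeff_single_one_mul {σ R : Type*} [CommSemiring R] (k : σ) (p q : MvPowerSeries σ R) :
    coeff (single k 1) (p * q) =
      constantCoeff p * coeff (single k 1) q + coeff (single k 1) p * constantCoeff q := by
  classical
  rw [coeff_mul, antidiagonal_single, Finset.sum_map]
  simp [Finset.Nat.antidiagonal_succ]

theorem constantCoeff_pderiv {σ R : Type*} [CommSemiring R] (i : σ) (f : MvPowerSeries σ R) :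
    constantCoeff (pderiv R i f) = coeff (single i 1) f := by
  rw [← coeff_zero_eq_constantCoeff_apply, coeff_pderiv]
  simp

section Decomposition

variable {σ R : Type*} [CommRing R]

def freePart (T : Finset σ) (s : MvPowerSeries σ R) : MvPowerSeries σ R :=
  fun m => if ∀ i ∈ T, m i = 0 then coeff m s else 0

theorem coeff_freePart (T : Finset σ) (s : MvPowerSeries σ R) (m : σ →₀ ℕ) :
    coeff m (freePart T s) = if ∀ i ∈ T, m i = 0 then coeff m s else 0 :=
  rfl

theorem exists_eq_freePart_add_sum_X_mul [DecidableEq σ] (s : MvPowerSeries σ R) (T : Finset σ) :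
    ∃ h : σ → MvPowerSeries σ R, s = freePart T s + ∑ i ∈ T, X i * h i := by
  induction T using Finset.induction_on with
  | empty => exact ⟨0, by ext m; simp [coeff_freePart]⟩
  | insert j T hj ih =>
    obtain ⟨h, hs⟩ := ih
    obtain ⟨g, hg⟩ : (X j : MvPowerSeries σ R) ∣ freePart T s - freePart (insert j T) s := by
      rw [X_dvd_iff]
      intro m hm
      simp [coeff_freePart, hm]
    refine ⟨Function.update h j g, ?_⟩
    rw [Finset.sum_insert hj, Function.update_self,
      Finset.sum_congr rfl fun i hi => by rw [Function.update_of_ne (ne_of_mem_of_not_mem hi hj)],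
      ← hg]
    nth_rw 1 [hs]
    ring

theorem exists_eq_C_add_sum_X_mul [Fintype σ] (s : MvPowerSeries σ R) :
    ∃ h : σ → MvPowerSeries σ R, s = C (constantCoeff s) + ∑ i, X i * h i := by
  classical
  obtain ⟨h, hs⟩ := exists_eq_freePart_add_sum_X_mul s Finset.univ
  refine ⟨h, ?_⟩
  convert hs using 2
  ext m
  simp only [coeff_freePart, coeff_C, Finset.mem_univ, true_implies]
  by_cases hm : m = 0
  · simp [hm]
  · rw [if_neg hm, if_neg fun h => hm (Finsupp.ext fun i => h i)]

end Decomposition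

section AlgHom

variable {σ τ K : Type*} [Field K]

theorem constantCoeff_algHom_apply (Θ : MvPowerSeries σ K →ₐ[K] MvPowerSeries τ K)
    (s : MvPowerSeries σ K) : constantCoeff (Θ s) = constantCoeff s := by
  set c := constantCoeff (Θ s)
  have hΘ : ¬ IsUnit (Θ (s - C c)) := by
    rw [isUnit_iff_constantCoeff, map_sub, c_eq_algebraMap, Θ.commutes, ← c_eq_algebraMap]
    simp [c]
  have hs : ¬ IsUnit (s - C c) := fun hu => hΘ (hu.map Θ)
  rw [isUnit_iff_constantCoeff, map_sub, constantCoeff_C, isUnit_iff_ne_zero, not_not,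
    sub_eq_zero] at hs
  exact hs.symm

theorem coeff_single_one_algHom_apply [Fintype σ]
    (Θ : MvPowerSeries σ K →ₐ[K] MvPowerSeries τ K) (s : MvPowerSeries σ K) (k : τ) :
    coeff (single k 1) (Θ s) = ∑ i, coeff (single i 1) s * coeff (single k 1) (Θ (X i)) := by
  classical
  obtain ⟨h, hs⟩ := exists_eq_C_add_sum_X_mul s
  have hlin : ∀ i, coeff (single i 1) s = constantCoeff (h i) := by
    intro i
    rw [hs]
    simp [coeff_single_one_mul, coeff_index_single_X, coeff_C]
  have hC : Θ (C (constantCoeff s)) = C (constantCoeff s) := by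
    rw [c_eq_algebraMap, Θ.commutes, ← c_eq_algebraMap]
  conv_lhs => rw [hs, map_add, hC, map_sum]
  simp [coeff_single_one_mul, constantCoeff_algHom_apply, hlin, coeff_C, mul_comm]

theorem coeff_single_one_eq_zero_of_algEquiv [Fintype τ]
    (Θ : MvPowerSeries σ K ≃ₐ[K] MvPowerSeries τ K) {s : MvPowerSeries σ K}
    (hs : ∀ k, coeff (single k 1) (Θ s) = 0) (j : σ) : coeff (single j 1) s = 0 := by
  have := coeff_single_one_algHom_apply Θ.symm.toAlgHom (Θ s) j
  simpa [hs] using this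

theorem exists_coeff_single_one_algEquiv_X_ne_zero [Fintype σ]
    (Θ : MvPowerSeries σ K ≃ₐ[K] MvPowerSeries τ K) (k : τ) :
    ∃ i, coeff (single k 1) (Θ (X i)) ≠ 0 := by
  by_contra! h
  have := coeff_single_one_algHom_apply Θ.toAlgHom (Θ.symm (X k)) k
  simp [h] at this

end AlgHom

section Weighted

variable {σ R : Type*} [CommRing R]

theorem coeff_mul_eq_constantCoeff_mul_of_le_weightedOrder {w : σ → ℕ} (hw : ∀ i, w i ≠ 0)
    {f : MvPowerSeries σ R} {e : σ →₀ ℕ} (he : (weight w e : ℕ∞) ≤ f.weightedOrder w)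
    (g : MvPowerSeries σ R) : coeff e (g * f) = constantCoeff g * coeff e f := by
  classical
  have := nonTorsionWeight_of ℕ (w := w) hw
  rw [coeff_mul, Finset.sum_eq_single (0, e)]
  · simp
  · rintro ⟨m, n⟩ hmn hne
    simp only [Finset.HasAntidiagonal.mem_antidiagonal] at hmn
    have hm : m ≠ 0 := by rintro rfl; simp_all
    have hm' : weight w m ≠ 0 := by rwa [Ne, weight_eq_zero_iff_eq_zero]
    have hn : weight w n < weight w e := by rw [← hmn, map_add]; omega
    rw [coeff_eq_zero_of_lt_weightedOrder w (lt_of_lt_of_le (by exact_mod_cast hn) he), mul_zero]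
  · simp

end Weighted

section A2

variable {R : Type*} [CommSemiring R] {b : Fin 4 → MvPowerSeries (Fin 4) R}

theorem coeff_single_one_pderiv_cube_add_sq (hb : ∀ i, constantCoeff (b i) = 0) (k : Fin 4) :
    coeff (single k 1) (pderiv R 0 (b 0 ^ 3 + b 1 ^ 2 + b 2 ^ 2 + b 3 ^ 2)) =
      2 * ∑ i ∈ {1, 2, 3}, coeff (single 0 1) (b i) * coeff (single k 1) (b i) := by
  simp [pow_succ, Derivation.leibniz, coeff_single_one_mul, hb, constantCoeff_pderiv]
  ring

theorem coeff_single_one_pderiv_pderiv_cube_add_sq (hb : ∀ i, constantCoeff (b i) = 0) :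
    coeff (single 0 1) (pderiv R 0 (pderiv R 0 (b 0 ^ 3 + b 1 ^ 2 + b 2 ^ 2 + b 3 ^ 2))) =
      6 * coeff (single 0 1) (b 0) ^ 3 + ∑ i ∈ {1, 2, 3}, coeff (single 0 1) (b i) *
        (4 * coeff (single 0 1) (pderiv R 0 (b i)) +
          2 * constantCoeff (pderiv R 0 (pderiv R 0 (b i)))) := by
  simp [pow_succ, Derivation.leibniz, coeff_single_one_mul, hb, constantCoeff_pderiv]
  ring

theorem coeff_xy_algEquiv_A2_ne_zero {K : Type*} [Field K] [CharZero K]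
    (Ψ : MvPowerSeries (Fin 4) K ≃ₐ[K] MvPowerSeries (Fin 4) K)
    (h6 : 6 ≤ (Ψ (X 0 ^ 3 + X 1 ^ 2 + X 2 ^ 2 + X 3 ^ 2)).weightedOrder ![1, 5, 3, 2]) :
    coeff (single 0 1 + single 1 1) (Ψ (X 0 ^ 3 + X 1 ^ 2 + X 2 ^ 2 + X 3 ^ 2)) ≠ 0 := by
  intro hxy
  set S := Ψ (X 0 ^ 3 + X 1 ^ 2 + X 2 ^ 2 + X 3 ^ 2)
  have hb : ∀ i, constantCoeff (Ψ (X i)) = 0 := fun i => by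
    simpa using constantCoeff_algHom_apply Ψ.toAlgHom (X i)
  have hS : S = Ψ (X 0) ^ 3 + Ψ (X 1) ^ 2 + Ψ (X 2) ^ 2 + Ψ (X 3) ^ 2 := by simp [S]
  have hlow : ∀ e, weight ![1, 5, 3, 2] e < 6 → coeff e S = 0 := fun e he =>
    coeff_eq_zero_of_lt_weightedOrder _ (lt_of_lt_of_le (by exact_mod_cast he) h6)
  have hp : ∀ i ∈ ({1, 2, 3} : Finset (Fin 4)), coeff (single 0 1) (Ψ (X i)) = 0 := by
    set w : MvPowerSeries (Fin 4) K :=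
      ∑ i ∈ ({1, 2, 3} : Finset (Fin 4)), coeff (single 0 1) (Ψ (X i)) • X i
    have hw : ∀ k, coeff (single k 1) (Ψ w) = 0 := by
      intro k
      have h1 : coeff (single k 1) (pderiv K 0 S) = 0 := by
        rw [coeff_pderiv, mul_eq_zero]
        left
        fin_cases k
        · exact hlow _ (by simp [weight_single])
        · rwa [add_comm]
        all_goals exact hlow _ (by simp [weight_single])
      rw [hS, coeff_single_one_pderiv_cube_add_sq (b := fun i => Ψ (X i)) hb] at h1
      simp only [w, map_sum, map_smul, smul_eq_mul]
      linear_combination h1 / 2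
    intro i hi
    have := coeff_single_one_eq_zero_of_algEquiv Ψ hw i
    fin_cases i <;> simp_all [w, coeff_index_single_X]
  have hp0 : coeff (single 0 1) (Ψ (X 0)) = 0 := by
    have h2 : coeff (single 0 1) (pderiv K 0 (pderiv K 0 S)) = 0 := by
      rw [coeff_pderiv, coeff_pderiv, hlow _ (by simp [weight_single])]
      simp
    rw [hS, coeff_single_one_pderiv_pderiv_cube_add_sq (b := fun i => Ψ (X i)) hb,
      Finset.sum_eq_zero fun i hi => by rw [hp i hi, zero_mul]] at h2
    simpa using h2
  obtain ⟨i, hi⟩ := exists_coeff_single_one_algEquiv_X_ne_zero Ψ 0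
  fin_cases i <;> simp_all

end A2

end MvPowerSeries

/-- if `wt f = 6` w.r.t. the weights `(1,5,3,2)` for `(x,y,z,t)` and `f` defines
an `A₂`-singularity (is contact equivalent to `x³ + y² + z² + t²`), then the coefficient of
the monomial `xy` in `f` is non-zero. -/
theorem stmt10 (f : MvPowerSeries (Fin 4) ℂ)
    (hwt : f.weightedOrder ![1, 5, 3, 2] = (6 : ℕ∞))
    (hA2 : ContactEquiv f
      ((X 0 : MvPowerSeries (Fin 4) ℂ) ^ 3 + X 1 ^ 2 + X 2 ^ 2 + X 3 ^ 2)) :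
    MvPowerSeries.coeff (R := ℂ)
      (Finsupp.single (0 : Fin 4) 1 + Finsupp.single (1 : Fin 4) 1) f ≠ 0 := by
  obtain ⟨Φ, u, hg⟩ := hA2
  have hS : Φ.symm (X 0 ^ 3 + X 1 ^ 2 + X 2 ^ 2 + X 3 ^ 2) = Φ.symm u * f := by
    rw [hg, map_mul, Φ.symm_apply_apply]
  have h6 :
      6 ≤ (Φ.symm (X 0 ^ 3 + X 1 ^ 2 + X 2 ^ 2 + X 3 ^ 2)).weightedOrder ![1, 5, 3, 2] := by
    rw [hS, ← hwt]
    exact le_add_self.trans (le_weightedOrder_mul _)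
  have hxy := coeff_xy_algEquiv_A2_ne_zero Φ.symm h6
  rw [hS, coeff_mul_eq_constantCoeff_mul_of_le_weightedOrder (w := ![1, 5, 3, 2]) (by decide)
    (by rw [hwt]; simp [Finsupp.weight_single])] at hxy
  exact right_ne_zero_of_mul hxy
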